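/- Suppose q = q₁X₁ + q₂X₂ + q₃X₃ is a quadratic form in X₁,…,X₄ with coefficients in a vector space S (i.e., q ∈ ker of the moving quadric map and has no X₄² term), where each qᵢ is a linear form in X₁,…,X₄ with coefficients in S. Given the exactness of the restricted Koszul column 0 → S₁³ → S₂³ → S₃ → 0 and commutativity of the moving plane/quadric diagram, q lies in the image of K₁⁴ under the multiplication map X. -/
import Mathlib


open Finset

/-- Corollary c1: abstract diagram chase. Here `S`, `S₂`, `S₃`
play the roles of the graded pieces `S_{Q∖E_I}`, `S_{2Q∖E_I}`, `S_{3Q∖E_I}`;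
`μ i : S → S₂` and `ν i : S₂ → S₃` are multiplication by `xᵢ'`, which commute
(`ν i ∘ μ j = ν j ∘ μ i`).  A moving quadric `q = ∑_{i,j} Xᵢ'Xⱼ' (q i j)` is
encoded by its coefficient array `q : Fin 4 → Fin 4 → S`, where the second
index records which `Xⱼ'` multiplies the linear form `qⱼ = ∑ᵢ Xᵢ' (q i j)`;
the moving quadric map is `ψ₂ q = ∑ⱼ ν j (∑ᵢ μ i (q i j))`, a moving plane is
`u : Fin 4 → S` with `∑ᵢ μ i (u i) = 0`, and the multiplication map `X` sends
a 4-tuple `u` of linear forms to the quadratic form with symmetrized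
coefficients `(i,j) ↦ u j i + u i j`.  Assuming exactness of the restricted
Koszul column `0 → S³ → S₂³ → S₃` at the middle (any `w : Fin 3 → S₂` with
`∑ ν (w) = 0` comes from an antisymmetric `s`), every moving quadric `q` with
no `X₄'²` term — indeed of the form `q₁X₁' + q₂X₂' + q₃X₃'`, i.e. with
`q i 3 = 0` — lies in the image of `K₁⁴` under `X`. -/
theorem vanishing_moving_quadric_comes_from_moving_planes
    (K S S₂ S₃ : Type*) [Field K]
    [AddCommGroup S] [Module K S] [AddCommGroup S₂] [Module K S₂]
    [AddCommGroup S₃] [Module K S₃]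
    (μ : Fin 4 → (S →ₗ[K] S₂)) (ν : Fin 4 → (S₂ →ₗ[K] S₃))
    (hcomm : ∀ i j : Fin 4, (ν i) ∘ₗ (μ j) = (ν j) ∘ₗ (μ i))
    (hKoszul : ∀ w : Fin 3 → S₂,
      (∑ i : Fin 3, ν i.castSucc (w i)) = 0 →
      ∃ s : Fin 3 → Fin 3 → S,
        (∀ i j : Fin 3, s i j = - s j i) ∧
        (∀ i : Fin 3, w i = ∑ j : Fin 3, μ j.castSucc (s i j)))
    (q : Fin 4 → Fin 4 → S)
    (hq4 : ∀ i : Fin 4, q i 3 = 0)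
    (hker : ∑ j : Fin 4, ν j (∑ i : Fin 4, μ i (q i j)) = 0) :
    ∃ u : Fin 4 → Fin 4 → S,
      (∀ j : Fin 4, ∑ i : Fin 4, μ i (u j i) = 0) ∧
      (∀ i j : Fin 4, q i j + q j i = u j i + u i j) := by
  -- the last column of `q` vanishes, so the kernel condition only involves
  -- the first three columns
  set w : Fin 3 → S₂ := fun j => ∑ i : Fin 4, μ i (q i j.castSucc) with hw_def
  have hc0 : ((0 : Fin 3).castSucc : Fin 4) = 0 := rfl
  have hc1 : ((1 : Fin 3).castSucc : Fin 4) = 1 := rfl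
  have hc2 : ((2 : Fin 3).castSucc : Fin 4) = 2 := rfl
  have hw : (∑ i : Fin 3, ν i.castSucc (w i)) = 0 := by
    have h3 : ∑ i : Fin 4, μ i (q i 3) = 0 := by
      simp [hq4]
    rw [Fin.sum_univ_four] at hker
    rw [Fin.sum_univ_three]
    simp only [hw_def, hc0, hc1, hc2]
    rw [h3, map_zero, add_zero] at hker
    exact hker
  obtain ⟨s, hanti, hs⟩ := hKoszul w hw
  -- extend `s` to an antisymmetric `t : Fin 4 → Fin 4 → S` vanishing on index 3
  set t : Fin 4 → Fin 4 → S := fun j i =>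
    if hj : (j : ℕ) < 3 then
      if hi : (i : ℕ) < 3 then s ⟨j, hj⟩ ⟨i, hi⟩ else 0
    else 0 with ht_def
  have hv0 : ((0 : Fin 4) : ℕ) = 0 := rfl
  have hv1 : ((1 : Fin 4) : ℕ) = 1 := rfl
  have hv2 : ((2 : Fin 4) : ℕ) = 2 := rfl
  have hv3 : ((3 : Fin 4) : ℕ) = 3 := rfl
  have htanti : ∀ i j : Fin 4, t i j = - t j i := by
    intro i j
    simp only [ht_def]
    split_ifs <;> first | exact hanti _ _ | simp
  have ht3 : ∀ j : Fin 4, t j 3 = 0 := by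
    intro j
    simp only [ht_def]
    split_ifs with h1 h2
    · rw [hv3] at h2; omega
    · rfl
    · rfl
  have htsum : ∀ j : Fin 3, ∑ i : Fin 4, μ i (t j.castSucc i)
      = ∑ i : Fin 4, μ i (q i j.castSucc) := by
    intro j
    have hthis := hs j
    simp only [hw_def] at hthis
    have ejc : ((j.castSucc : Fin 4) : ℕ) = (j : ℕ) := rfl
    have e0 : t (j.castSucc) 0 = s j 0 := by
      simp only [ht_def]
      rw [dif_pos (by rw [ejc]; exact j.isLt), dif_pos (by rw [hv0]; omega)]
      congr 1 <;> exact Fin.ext rfl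
    have e1 : t (j.castSucc) 1 = s j 1 := by
      simp only [ht_def]
      rw [dif_pos (by rw [ejc]; exact j.isLt), dif_pos (by rw [hv1]; omega)]
      congr 1 <;> exact Fin.ext rfl
    have e2 : t (j.castSucc) 2 = s j 2 := by
      simp only [ht_def]
      rw [dif_pos (by rw [ejc]; exact j.isLt), dif_pos (by rw [hv2]; omega)]
      congr 1 <;> exact Fin.ext rfl
    rw [hthis, Fin.sum_univ_four, Fin.sum_univ_three, ht3, map_zero, add_zero,
      e0, e1, e2, hc0, hc1, hc2]
  -- define the moving planes
  refine ⟨fun j i => if (j : ℕ) < 3 then q i j - t j i else 0, ?_, ?_⟩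
  · intro j
    by_cases hj : (j : ℕ) < 3
    · have : j = (⟨(j : ℕ), hj⟩ : Fin 3).castSucc := by
        apply Fin.ext; rfl
      simp only [hj, if_true]
      rw [this]
      have := htsum ⟨(j : ℕ), hj⟩
      simp only [map_sub, Finset.sum_sub_distrib]
      rw [this, sub_self]
    · simp [hj]
  · intro i j
    by_cases hi : (i : ℕ) < 3 <;> by_cases hj : (j : ℕ) < 3
    · simp only [hi, hj, if_true]
      rw [htanti j i]
      abel
    · have hj3 : j = 3 := by omega
      subst hj3
      simp only [hi, hj, if_true, if_false, hq4, ht3]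
      abel
    · have hi3 : i = 3 := by omega
      subst hi3
      simp only [hi, hj, if_true, if_false, hq4, ht3]
      abel
    · have hi3 : i = 3 := by omega
      have hj3 : j = 3 := by omega
      subst hi3; subst hj3
      simp [hq4, hv3]
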